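/- For two equal-weight mixtures of two unit-variance Gaussians G_μ and G_ν on ℝ, the total variation distance between them equals the maximum over all sets E that are unions of at most two disjoint intervals of G_μ(E) - G_ν(E). -/

import Mathlib

open Real MeasureTheory Set

noncomputable def sumExp (l : List (ℝ × ℝ)) (x : ℝ) : ℝ :=
  (l.map fun p => p.1 * Real.exp (p.2 * x)).sum

lemma sumExp_nil (x : ℝ) : sumExp [] x = 0 := rfl
lemma sumExp_cons (p : ℝ × ℝ) (l : List (ℝ × ℝ)) (x : ℝ) :
    sumExp (p :: l) x = p.1 * Real.exp (p.2 * x) + sumExp l x := rfl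

lemma hasDerivAt_sumExp (l : List (ℝ × ℝ)) (x : ℝ) :
    HasDerivAt (sumExp l) (sumExp (l.map fun p => (p.1 * p.2, p.2)) x) x := by
  induction l with
  | nil => exact hasDerivAt_const x (0:ℝ)
  | cons p l ih =>
      have h1 : HasDerivAt (fun x => p.1 * Real.exp (p.2 * x)) (p.1 * p.2 * Real.exp (p.2 * x)) x := by
        have := (Real.hasDerivAt_exp (p.2 * x)).comp x ((hasDerivAt_id x).const_mul p.2)
        simpa [mul_comm, mul_assoc, mul_left_comm] using this.const_mul p.1
      exact h1.add ih

lemma sumExp_shift (l : List (ℝ × ℝ)) (a x : ℝ) :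
    sumExp (l.map fun p => (p.1, p.2 - a)) x = Real.exp (-(a * x)) * sumExp l x := by
  induction l with
  | nil => simp [sumExp]
  | cons p l ih =>
      simp only [List.map_cons, sumExp_cons, ih, sub_mul, Real.exp_sub]
      rw [Real.exp_neg]
      field_simp

lemma sumExp_zero_head (c a : ℝ) (l : List (ℝ × ℝ)) (x : ℝ) :
    sumExp ((0, a) :: l) x = sumExp l x := by simp [sumExp_cons]

theorem sumExp_eq_zero : ∀ (n : ℕ) (l : List (ℝ × ℝ)), l.length = n →
    ∀ z : Fin n → ℝ, StrictMono z → (∀ i, sumExp l (z i) = 0) → ∀ x, sumExp l x = 0 := by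
  intro n
  induction n with
  | zero =>
      rintro l hl - - - x
      rw [List.length_eq_zero_iff] at hl
      simp [hl, sumExp]
  | succ n ih =>
      rintro l hl z hz h0 x
      obtain ⟨⟨c, a⟩, l', rfl⟩ : ∃ p l', l = p :: l' := by
        cases l with
        | nil => simp at hl
        | cons p l' => exact ⟨p, l', rfl⟩
      have hl' : l'.length = n := by simpa using hl
      set q : ℝ → ℝ := sumExp (((c, a) :: l').map fun p => (p.1, p.2 - a)) with hq
      have hqval : ∀ y, q y = Real.exp (-(a * y)) * sumExp ((c, a) :: l') y := fun y =>
        sumExp_shift _ a y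
      have hq0 : ∀ i, q (z i) = 0 := fun i => by rw [hqval, h0 i, mul_zero]
      -- derivative of q
      set m : List (ℝ × ℝ) := l'.map fun p => (p.1 * (p.2 - a), p.2 - a) with hm
      have hderiv : ∀ y, HasDerivAt q (sumExp m y) y := by
        intro y
        have := hasDerivAt_sumExp (((c, a) :: l').map fun p => (p.1, p.2 - a)) y
        have hml : ((((c, a) :: l').map fun p => (p.1, p.2 - a)).map fun p => (p.1 * p.2, p.2))
            = (c * (a - a), a - a) :: m := by
          simp [hm, List.map_map, Function.comp]
        rw [hml] at this
        have h2 : sumExp ((c * (a - a), a - a) :: m) y = sumExp m y := by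
          rw [sumExp_cons]; simp
        rw [h2] at this
        exact this
      have hdiff : Differentiable ℝ q := fun y => (hderiv y).differentiableAt
      -- Rolle between consecutive zeros
      have hrolle : ∀ i : Fin n, ∃ y ∈ Set.Ioo (z i.castSucc) (z i.succ), sumExp m y = 0 := by
        intro i
        obtain ⟨y, hy, hy0⟩ := exists_deriv_eq_zero (hz (Fin.castSucc_lt_succ (i := i)))
          hdiff.continuous.continuousOn (by rw [hq0, hq0])
        exact ⟨y, hy, by rw [← (hderiv y).deriv]; exact hy0⟩
      choose y hy hy0 using hrolle
      have hym : StrictMono y := by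
        intro i j hij
        calc y i < z i.succ := (hy i).2
          _ ≤ z j.castSucc := hz.monotone (by
            rw [Fin.le_def, Fin.val_succ, Fin.coe_castSucc]; exact hij)
          _ < y j := (hy j).1
      have hmzero : ∀ t, sumExp m t = 0 := ih m (by simp [hm, hl']) y hym hy0
      have hqconst : ∀ u v : ℝ, q u = q v :=
        is_const_of_deriv_eq_zero hdiff (fun t => by rw [(hderiv t).deriv]; exact hmzero t)
      have hqz : q x = 0 := by rw [hqconst x (z 0), hq0]
      rw [hqval] at hqz
      rcases mul_eq_zero.1 hqz with h | h
      · exact absurd h (Real.exp_ne_zero _)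
      · exact h

section TwoIntervals

variable (f : ℝ → ℝ)

def MyRel (a b : ℝ) : Prop := ∀ t ∈ Set.uIcc a b, 0 ≤ f t

def myHull (S : Set ℝ) : Set ℝ := {t | ∃ x ∈ S, ∃ y ∈ S, x ≤ t ∧ t ≤ y}

lemma myHull_ordConnected (S : Set ℝ) : (myHull S).OrdConnected := by
  constructor
  rintro t₁ ⟨x₁, hx₁, y₁, hy₁, h₁, h₁'⟩ t₂ ⟨x₂, hx₂, y₂, hy₂, h₂, h₂'⟩ t ht
  exact ⟨x₁, hx₁, y₂, hy₂, le_trans h₁ ht.1, le_trans ht.2 h₂'⟩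

lemma subset_myHull (S : Set ℝ) : S ⊆ myHull S := fun x hx => ⟨x, hx, x, hx, le_rfl, le_rfl⟩

-- if there is no negative value strictly between two positive points and so on,
-- transitivity of MyRel via uIcc
lemma myRel_trans {a b c : ℝ} (hab : MyRel f a b) (hbc : MyRel f b c) : MyRel f a c := by
  intro t ht
  rcases Set.uIcc_subset_uIcc_union_uIcc (b := b) ht with h | h
  · exact hab t h
  · exact hbc t h

lemma myRel_symm {a b : ℝ} (hab : MyRel f a b) : MyRel f b a := by
  intro t ht; exact hab t (by rwa [Set.uIcc_comm])

-- key property of hulls of related sets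
lemma myHull_key {p : ℝ} {S : Set ℝ} (hS : ∀ x ∈ S, MyRel f p x) :
    ∀ t ∈ myHull S, MyRel f p t := by
  rintro t ⟨x, hx, y, hy, hxt, hty⟩
  have hpx := hS x hx
  have hpy := hS y hy
  intro s hs
  rcases Set.uIcc_subset_uIcc_union_uIcc (b := x) hs with h | h
  · exact hpx s h
  · -- s ∈ uIcc x t ⊆ uIcc x y ⊆ uIcc x p ∪ uIcc p y
    have hxy : Set.uIcc x t ⊆ Set.uIcc x y :=
      Set.uIcc_subset_uIcc Set.left_mem_uIcc
        (by rw [Set.mem_uIcc]; exact Or.inl ⟨hxt, hty⟩)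
    rcases Set.uIcc_subset_uIcc_union_uIcc (b := p) (hxy h) with h' | h'
    · exact myRel_symm f hpx s h'
    · exact hpy s h'

lemma myHull_subset_nonneg {p : ℝ} {S : Set ℝ} (hS : ∀ x ∈ S, MyRel f p x) :
    myHull S ⊆ {x | 0 ≤ f x} := by
  intro t ht
  exact myHull_key f hS t ht t Set.right_mem_uIcc

-- no three pairwise unrelated positive points (sorted version)
lemma no_three_sorted
    (H : ¬ ∃ p₁ w₁ p₂ w₂ p₃ : ℝ, p₁ < w₁ ∧ w₁ < p₂ ∧ p₂ < w₂ ∧ w₂ < p₃ ∧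
      0 < f p₁ ∧ f w₁ < 0 ∧ 0 < f p₂ ∧ f w₂ < 0 ∧ 0 < f p₃)
    {a b c : ℝ} (hab : a < b) (hbc : b < c)
    (ha : 0 < f a) (hb : 0 < f b) (hc : 0 < f c)
    (h1 : ¬ MyRel f a b) (h2 : ¬ MyRel f b c) : False := by
  simp only [MyRel, not_forall] at h1 h2
  obtain ⟨w₁, hw₁m, hw₁⟩ := h1
  obtain ⟨w₂, hw₂m, hw₂⟩ := h2
  push_neg at hw₁ hw₂
  rw [Set.uIcc_of_le hab.le] at hw₁m
  rw [Set.uIcc_of_le hbc.le] at hw₂m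
  have hw₁a : a < w₁ := lt_of_le_of_ne hw₁m.1 (by rintro rfl; exact absurd hw₁ (not_lt.2 ha.le))
  have hw₁b : w₁ < b := lt_of_le_of_ne hw₁m.2 (by rintro rfl; exact absurd hw₁ (not_lt.2 hb.le))
  have hw₂b : b < w₂ := lt_of_le_of_ne hw₂m.1 (by rintro rfl; exact absurd hw₂ (not_lt.2 hb.le))
  have hw₂c : w₂ < c := lt_of_le_of_ne hw₂m.2 (by rintro rfl; exact absurd hw₂ (not_lt.2 hc.le))
  exact H ⟨a, w₁, b, w₂, c, hw₁a, hw₁b, hw₂b, hw₂c, ha, hw₁, hb, hw₂, hc⟩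

lemma no_three
    (H : ¬ ∃ p₁ w₁ p₂ w₂ p₃ : ℝ, p₁ < w₁ ∧ w₁ < p₂ ∧ p₂ < w₂ ∧ w₂ < p₃ ∧
      0 < f p₁ ∧ f w₁ < 0 ∧ 0 < f p₂ ∧ f w₂ < 0 ∧ 0 < f p₃)
    {a b c : ℝ}
    (ha : 0 < f a) (hb : 0 < f b) (hc : 0 < f c)
    (h1 : ¬ MyRel f a b) (h2 : ¬ MyRel f b c) (h3 : ¬ MyRel f a c) : False := by
  have hab : a ≠ b := by rintro rfl; exact h1 (fun t ht => by simp at ht; rw [ht]; exact ha.le)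
  have hbc : b ≠ c := by rintro rfl; exact h2 (fun t ht => by simp at ht; rw [ht]; exact hb.le)
  have hac : a ≠ c := by rintro rfl; exact h3 (fun t ht => by simp at ht; rw [ht]; exact ha.le)
  have h1' := fun h => h1 (myRel_symm f h)
  have h2' := fun h => h2 (myRel_symm f h)
  have h3' := fun h => h3 (myRel_symm f h)
  rcases lt_or_gt_of_ne hab with h | h <;> rcases lt_or_gt_of_ne hbc with h' | h' <;>
    rcases lt_or_gt_of_ne hac with h'' | h''
  · exact no_three_sorted f H h h' ha hb hc h1 h2
  · linarith
  · exact no_three_sorted f H h'' h' ha hc hb h3 h2'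
  · exact no_three_sorted f H h'' h hc ha hb h3' h1
  · exact no_three_sorted f H h h'' hb ha hc h1' h3
  · exact no_three_sorted f H h' h'' hb hc ha h2 h3'
  · linarith
  · exact no_three_sorted f H h' h hc hb ha h2' h1'

theorem two_intervals_exist
    (H : ¬ ∃ p₁ w₁ p₂ w₂ p₃ : ℝ, p₁ < w₁ ∧ w₁ < p₂ ∧ p₂ < w₂ ∧ w₂ < p₃ ∧
      0 < f p₁ ∧ f w₁ < 0 ∧ 0 < f p₂ ∧ f w₂ < 0 ∧ 0 < f p₃) :
    ∃ I₁ I₂ : Set ℝ, I₁.OrdConnected ∧ I₂.OrdConnected ∧ Disjoint I₁ I₂ ∧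
      {x | 0 < f x} ⊆ I₁ ∪ I₂ ∧ I₁ ∪ I₂ ⊆ {x | 0 ≤ f x} := by
  by_cases hP : ∀ x, f x ≤ 0
  · refine ⟨∅, ∅, Set.ordConnected_empty, Set.ordConnected_empty, disjoint_bot_left, ?_, ?_⟩
    · intro x hx; exact absurd (hP x) (not_le.2 hx)
    · simp
  push_neg at hP
  obtain ⟨p, hp⟩ := hP
  set C₁ : Set ℝ := {x | 0 < f x ∧ MyRel f p x} with hC₁
  set C₂ : Set ℝ := {x | 0 < f x ∧ ¬ MyRel f p x} with hC₂
  by_cases h2 : ∀ y, 0 < f y → MyRel f p y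
  · refine ⟨myHull C₁, ∅, myHull_ordConnected _, Set.ordConnected_empty,
      disjoint_bot_right, ?_, ?_⟩
    · intro x hx
      exact Or.inl (subset_myHull C₁ ⟨hx, h2 x hx⟩)
    · rw [Set.union_empty]
      exact myHull_subset_nonneg f (fun x hx => hx.2)
  push_neg at h2
  obtain ⟨p₂, hp₂, hnp₂⟩ := h2
  have hC₂rel : ∀ x ∈ C₂, MyRel f p₂ x := by
    intro x hx
    by_contra hcon
    exact no_three f H hp hp₂ hx.1 hnp₂ hcon hx.2
  refine ⟨myHull C₁, myHull C₂, myHull_ordConnected _, myHull_ordConnected _, ?_, ?_, ?_⟩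
  · -- disjointness
    rw [Set.disjoint_left]
    rintro t ht₁ ht₂
    have h1 : MyRel f p t := myHull_key f (fun x hx => hx.2) t ht₁
    have h2 : MyRel f p₂ t := myHull_key f hC₂rel t ht₂
    exact hnp₂ (myRel_trans f h1 (myRel_symm f h2))
  · intro x hx
    by_cases hr : MyRel f p x
    · exact Or.inl (subset_myHull C₁ ⟨hx, hr⟩)
    · exact Or.inr (subset_myHull C₂ ⟨hx, hr⟩)
  · rintro t (ht | ht)
    · exact myHull_subset_nonneg f (fun x hx => hx.2) ht
    · exact myHull_subset_nonneg f hC₂rel ht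

end TwoIntervals

noncomputable def fdiff (μ₁ μ₂ ν₁ ν₂ x : ℝ) : ℝ :=
  (1/2) * ((Real.sqrt (2 * π))⁻¹ * Real.exp (-(x - μ₁) ^ 2 / 2)
          + (Real.sqrt (2 * π))⁻¹ * Real.exp (-(x - μ₂) ^ 2 / 2))
  - (1/2) * ((Real.sqrt (2 * π))⁻¹ * Real.exp (-(x - ν₁) ^ 2 / 2)
          + (Real.sqrt (2 * π))⁻¹ * Real.exp (-(x - ν₂) ^ 2 / 2))

noncomputable def gaussList (μ₁ μ₂ ν₁ ν₂ : ℝ) : List (ℝ × ℝ) :=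
  [((1/2) * (Real.sqrt (2 * π))⁻¹ * Real.exp (-μ₁^2/2), μ₁),
   ((1/2) * (Real.sqrt (2 * π))⁻¹ * Real.exp (-μ₂^2/2), μ₂),
   (-((1/2) * (Real.sqrt (2 * π))⁻¹ * Real.exp (-ν₁^2/2)), ν₁),
   (-((1/2) * (Real.sqrt (2 * π))⁻¹ * Real.exp (-ν₂^2/2)), ν₂)]

lemma gauss_split (a x : ℝ) :
    Real.exp (-(x - a) ^ 2 / 2) = Real.exp (-a^2/2) * (Real.exp (a * x) * Real.exp (-x^2/2)) := by
  rw [← Real.exp_add, ← Real.exp_add]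
  congr 1
  ring

lemma fdiff_eq (μ₁ μ₂ ν₁ ν₂ x : ℝ) :
    fdiff μ₁ μ₂ ν₁ ν₂ x = Real.exp (-x^2/2) * sumExp (gaussList μ₁ μ₂ ν₁ ν₂) x := by
  simp only [fdiff, gaussList, sumExp, List.map_cons, List.map_nil, List.sum_cons,
    List.sum_nil, gauss_split]
  ring

lemma continuous_fdiff (μ₁ μ₂ ν₁ ν₂ : ℝ) : Continuous (fdiff μ₁ μ₂ ν₁ ν₂) := by
  unfold fdiff
  fun_prop

lemma integrable_gauss (a : ℝ) :
    Integrable (fun x : ℝ => Real.exp (-(x - a) ^ 2 / 2)) := by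
  have h := (integrable_exp_neg_mul_sq (by norm_num : (0:ℝ) < 1/2)).comp_sub_right a
  have he : (fun x : ℝ => Real.exp (-(x - a) ^ 2 / 2))
      = fun x : ℝ => Real.exp (-(1/2) * (x - a) ^ 2) := by
    funext x
    rw [show -(x - a) ^ 2 / 2 = -(1/2) * (x - a) ^ 2 by ring]
  rw [he]
  exact h

lemma integrable_fdiff (μ₁ μ₂ ν₁ ν₂ : ℝ) : Integrable (fdiff μ₁ μ₂ ν₁ ν₂) := by
  unfold fdiff
  refine Integrable.sub ?_ ?_ <;>
  exact (((integrable_gauss _).const_mul _).add ((integrable_gauss _).const_mul _)).const_mul _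

lemma integral_gauss_shift (a : ℝ) :
    ∫ x : ℝ, Real.exp (-(x - a) ^ 2 / 2) = ∫ x : ℝ, Real.exp (-x ^ 2 / 2) :=
  integral_sub_right_eq_self (fun u => Real.exp (-u ^ 2 / 2)) a

lemma integral_fdiff_zero (μ₁ μ₂ ν₁ ν₂ : ℝ) : ∫ x, fdiff μ₁ μ₂ ν₁ ν₂ x = 0 := by
  unfold fdiff
  rw [integral_sub, MeasureTheory.integral_const_mul, MeasureTheory.integral_const_mul,
    integral_add ((integrable_gauss _).const_mul _) ((integrable_gauss _).const_mul _),
    integral_add ((integrable_gauss _).const_mul _) ((integrable_gauss _).const_mul _),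
    MeasureTheory.integral_const_mul, MeasureTheory.integral_const_mul, MeasureTheory.integral_const_mul, MeasureTheory.integral_const_mul,
    integral_gauss_shift, integral_gauss_shift, integral_gauss_shift, integral_gauss_shift]
  · ring
  · exact (((integrable_gauss _).const_mul _).add ((integrable_gauss _).const_mul _)).const_mul _
  · exact (((integrable_gauss _).const_mul _).add ((integrable_gauss _).const_mul _)).const_mul _










lemma fdiff_zero_of (μ₁ μ₂ ν₁ ν₂ z : ℝ) (h : fdiff μ₁ μ₂ ν₁ ν₂ z = 0) :
    sumExp (gaussList μ₁ μ₂ ν₁ ν₂) z = 0 := by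
  rw [fdiff_eq] at h
  rcases mul_eq_zero.1 h with h | h
  · exact absurd h (Real.exp_ne_zero _)
  · exact h

lemma no_quintuple (μ₁ μ₂ ν₁ ν₂ : ℝ) :
    ¬ ∃ p₁ w₁ p₂ w₂ p₃ : ℝ, p₁ < w₁ ∧ w₁ < p₂ ∧ p₂ < w₂ ∧ w₂ < p₃ ∧
      0 < fdiff μ₁ μ₂ ν₁ ν₂ p₁ ∧ fdiff μ₁ μ₂ ν₁ ν₂ w₁ < 0 ∧
      0 < fdiff μ₁ μ₂ ν₁ ν₂ p₂ ∧ fdiff μ₁ μ₂ ν₁ ν₂ w₂ < 0 ∧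
      0 < fdiff μ₁ μ₂ ν₁ ν₂ p₃ := by
  rintro ⟨p₁, w₁, p₂, w₂, p₃, h1, h2, h3, h4, hp₁, hw₁, hp₂, hw₂, hp₃⟩
  set f := fdiff μ₁ μ₂ ν₁ ν₂ with hf
  have hcont : ContinuousOn f (Set.Icc p₁ p₃) := (continuous_fdiff μ₁ μ₂ ν₁ ν₂).continuousOn
  have hc : ∀ a b : ℝ, a ≤ b → ContinuousOn f (Set.Icc a b) :=
    fun a b _ => (continuous_fdiff μ₁ μ₂ ν₁ ν₂).continuousOn
  obtain ⟨z₁, hz₁m, hz₁⟩ := intermediate_value_Ioo' h1.le (hc _ _ h1.le)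
    (Set.mem_Ioo.2 ⟨hw₁, hp₁⟩)
  obtain ⟨z₂, hz₂m, hz₂⟩ := intermediate_value_Ioo h2.le (hc _ _ h2.le)
    (Set.mem_Ioo.2 ⟨hw₁, hp₂⟩)
  obtain ⟨z₃, hz₃m, hz₃⟩ := intermediate_value_Ioo' h3.le (hc _ _ h3.le)
    (Set.mem_Ioo.2 ⟨hw₂, hp₂⟩)
  obtain ⟨z₄, hz₄m, hz₄⟩ := intermediate_value_Ioo h4.le (hc _ _ h4.le)
    (Set.mem_Ioo.2 ⟨hw₂, hp₃⟩)
  set z : Fin 4 → ℝ := ![z₁, z₂, z₃, z₄] with hz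
  have hmono : StrictMono z := by
    rw [Fin.strictMono_iff_lt_succ]
    intro i
    fin_cases i <;>
      simp only [hz, Fin.castSucc, Fin.succ, Matrix.cons_val_zero, Matrix.cons_val_one,
        Matrix.head_cons, Fin.mk_one, Matrix.cons_val_two, Matrix.tail_cons,
        Matrix.cons_val_three] <;>
      [skip; skip; skip] <;>
      first
      | exact lt_trans hz₁m.2 hz₂m.1
      | exact lt_trans hz₂m.2 hz₃m.1
      | exact lt_trans hz₃m.2 hz₄m.1
  have hzero : ∀ i, sumExp (gaussList μ₁ μ₂ ν₁ ν₂) (z i) = 0 := by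
    intro i
    fin_cases i <;>
      [exact fdiff_zero_of _ _ _ _ _ hz₁; exact fdiff_zero_of _ _ _ _ _ hz₂;
       exact fdiff_zero_of _ _ _ _ _ hz₃; exact fdiff_zero_of _ _ _ _ _ hz₄]
  have hall := sumExp_eq_zero 4 (gaussList μ₁ μ₂ ν₁ ν₂) rfl z hmono hzero
  have : f p₁ = 0 := by rw [hf, fdiff_eq, hall, mul_zero]
  linarith

lemma setint_half_abs (f : ℝ → ℝ) (hf : Integrable f) (hc : Continuous f)
    (h0 : ∫ x, f x = 0) :
    ∫ x in {x | 0 < f x}, f x = (1/2) * ∫ x, |f x| := by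
  set P := {x | 0 < f x} with hPdef
  have hP : MeasurableSet P := measurableSet_lt measurable_const hc.measurable
  have h1 : ∫ x in P, |f x| = ∫ x in P, f x :=
    setIntegral_congr_fun hP (fun x hx => abs_of_pos hx)
  have h2 : ∫ x in Pᶜ, |f x| = - ∫ x in Pᶜ, f x := by
    rw [← integral_neg]
    exact setIntegral_congr_fun hP.compl (fun x hx => abs_of_nonpos (not_lt.1 hx))
  have h3 := integral_add_compl hP hf.abs
  have h4 := integral_add_compl hP hf
  rw [h0] at h4
  linarith

lemma setint_upper (f : ℝ → ℝ) (hf : Integrable f) (hc : Continuous f) {E : Set ℝ}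
    (hE : MeasurableSet E) :
    ∫ x in E, f x ≤ ∫ x in {x | 0 < f x}, f x := by
  set P := {x | 0 < f x} with hPdef
  have hP : MeasurableSet P := measurableSet_lt measurable_const hc.measurable
  have hsplit : ∫ x in E, f x = (∫ x in E ∩ P, f x) + ∫ x in E \ P, f x := by
    have h := setIntegral_union (f := f) (μ := volume)
      (Set.disjoint_sdiff_right.mono_left (Set.inter_subset_right : E ∩ P ⊆ P))
      (hE.diff hP) hf.integrableOn hf.integrableOn
    rw [Set.inter_union_diff] at h
    exact h
  have hneg : ∫ x in E \ P, f x ≤ 0 :=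
    setIntegral_nonpos (hE.diff hP) (fun x hx => not_lt.1 hx.2)
  have hmono : ∫ x in E ∩ P, f x ≤ ∫ x in P, f x := by
    refine setIntegral_mono_set hf.integrableOn ?_ (Filter.Eventually.of_forall ?_)
    · exact (ae_restrict_iff' hP).2 (Filter.Eventually.of_forall (fun x hx => le_of_lt hx))
    · exact fun x hx => hx.2
  linarith

lemma setint_mem (f : ℝ → ℝ) (hf : Integrable f) (hc : Continuous f) {E : Set ℝ}
    (hE : MeasurableSet E) (h1 : {x | 0 < f x} ⊆ E) (h2 : E ⊆ {x | 0 ≤ f x}) :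
    ∫ x in E, f x = ∫ x in {x | 0 < f x}, f x := by
  set P := {x | 0 < f x} with hPdef
  have hP : MeasurableSet P := measurableSet_lt measurable_const hc.measurable
  have hE' : E = P ∪ (E \ P) := (Set.union_diff_cancel h1).symm
  rw [hE', setIntegral_union Set.disjoint_sdiff_right (hE.diff hP)
    hf.integrableOn hf.integrableOn]
  have hz : ∫ x in E \ P, f x = 0 := by
    rw [setIntegral_congr_fun (hE.diff hP)
      (fun x hx => le_antisymm (not_lt.1 hx.2) (h2 hx.1) : Set.EqOn f 0 (E \ P))]
    simp
  rw [hz, add_zero]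

/-- The total variation distance between two equal-weight mixtures of two
unit-variance Gaussians is attained (as a maximum) over sets that are unions
of at most two disjoint intervals. -/
theorem tv_attained_two_intervals (μ₁ μ₂ ν₁ ν₂ : ℝ) :
    IsGreatest
      {v : ℝ | ∃ I₁ I₂ : Set ℝ, I₁.OrdConnected ∧ I₂.OrdConnected ∧
        Disjoint I₁ I₂ ∧ MeasurableSet (I₁ ∪ I₂) ∧
        v = ∫ x in I₁ ∪ I₂,
          ((1/2) * ((Real.sqrt (2 * π))⁻¹ * Real.exp (-(x - μ₁) ^ 2 / 2)
                  + (Real.sqrt (2 * π))⁻¹ * Real.exp (-(x - μ₂) ^ 2 / 2))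
          - (1/2) * ((Real.sqrt (2 * π))⁻¹ * Real.exp (-(x - ν₁) ^ 2 / 2)
                  + (Real.sqrt (2 * π))⁻¹ * Real.exp (-(x - ν₂) ^ 2 / 2)))}
      ((1/2) * ∫ x : ℝ,
        |(1/2) * ((Real.sqrt (2 * π))⁻¹ * Real.exp (-(x - μ₁) ^ 2 / 2)
                + (Real.sqrt (2 * π))⁻¹ * Real.exp (-(x - μ₂) ^ 2 / 2))
        - (1/2) * ((Real.sqrt (2 * π))⁻¹ * Real.exp (-(x - ν₁) ^ 2 / 2)
                + (Real.sqrt (2 * π))⁻¹ * Real.exp (-(x - ν₂) ^ 2 / 2))|) := by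
  have hf := integrable_fdiff μ₁ μ₂ ν₁ ν₂
  have hc := continuous_fdiff μ₁ μ₂ ν₁ ν₂
  have h0 := integral_fdiff_zero μ₁ μ₂ ν₁ ν₂
  have hhalf := setint_half_abs _ hf hc h0
  constructor
  · obtain ⟨I₁, I₂, hI₁, hI₂, hdisj, hsub, hsub'⟩ :=
      two_intervals_exist (fdiff μ₁ μ₂ ν₁ ν₂) (no_quintuple μ₁ μ₂ ν₁ ν₂)
    have hmeas : MeasurableSet (I₁ ∪ I₂) := hI₁.measurableSet.union hI₂.measurableSet
    refine ⟨I₁, I₂, hI₁, hI₂, hdisj, hmeas, ?_⟩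
    show (1/2) * (∫ x : ℝ, |fdiff μ₁ μ₂ ν₁ ν₂ x|)
        = ∫ x in I₁ ∪ I₂, fdiff μ₁ μ₂ ν₁ ν₂ x
    rw [← hhalf, setint_mem _ hf hc hmeas hsub hsub']
  · rintro v ⟨I₁, I₂, hI₁, hI₂, hdisj, hmeas, rfl⟩
    show (∫ x in I₁ ∪ I₂, fdiff μ₁ μ₂ ν₁ ν₂ x)
        ≤ (1/2) * ∫ x : ℝ, |fdiff μ₁ μ₂ ν₁ ν₂ x|
    rw [← hhalf]
    exact setint_upper _ hf hc hmeas
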